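/- On surface terms of the linear language, the surface typing judgment Γ ⊢ e : τ holds if and only if the internal typing judgment with empty store typing and empty store, ∅; Γ ⊢ ∅ ▷ e : τ, holds. -/
import Mathlib


/-! # The internal linear language L -/

abbrev Var := String
abbrev Loc := ℕ

/-- Linear types (type variables in de Bruijn style for `μ`). -/
inductive LTy : Type
  | unit : LTy
  | tensor : LTy → LTy → LTy
  | lolli : LTy → LTy → LTy
  | sum : LTy → LTy → LTy
  | mu : LTy → LTy
  | tvar : ℕ → LTy
  | bang : LTy → LTy
  | box : LTy → LTy
  | emptybox : LTy
  deriving DecidableEq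

/-- Substitution of a (closed) type for type variable `k`. -/
def LTy.substT : LTy → ℕ → LTy → LTy
  | .unit, _, _ => .unit
  | .tensor a b, k, u => .tensor (a.substT k u) (b.substT k u)
  | .lolli a b, k, u => .lolli (a.substT k u) (b.substT k u)
  | .sum a b, k, u => .sum (a.substT k u) (b.substT k u)
  | .mu a, k, u => .mu (a.substT (k+1) u)
  | .tvar n, k, u => if n = k then u else .tvar n
  | .bang a, k, u => .bang (a.substT k u)
  | .box a, k, u => .box (a.substT k u)
  | .emptybox, _, _ => .emptybox

/-- Unfolding of a recursive type `μ.τ`. -/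
def LTy.unfoldMu (t : LTy) : LTy := t.substT 0 (.mu t)

/-- Typing contexts: partial maps from variables to linear types. -/
abbrev Ctx := Var → Option LTy

def Ctx.empty : Ctx := fun _ => none

def Ctx.cons (x : Var) (τ : LTy) (Γ : Ctx) : Ctx :=
  fun y => if y = x then some τ else Γ y

/-- A context of the form `!Γ`: all bindings are duplicable. -/
def Ctx.Duplicable (Γ : Ctx) : Prop :=
  ∀ x τ, Γ x = some τ → ∃ τ', τ = LTy.bang τ'

/-- `Γ₁ ⋈ Γ₂` is defined iff all shared variables carry the same
duplicable type. -/
def CtxJoinDef (Γ₁ Γ₂ : Ctx) : Prop :=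
  ∀ x τ₁ τ₂, Γ₁ x = some τ₁ → Γ₂ x = some τ₂ → τ₁ = τ₂ ∧ ∃ τ, τ₁ = LTy.bang τ

def ctxJoin (Γ₁ Γ₂ : Ctx) : Ctx :=
  fun x => (Γ₁ x).elim (Γ₂ x) some

/-- Two contexts are disjoint when no variable is bound in both. -/
def CtxDisjoint (Γ₁ Γ₂ : Ctx) : Prop :=
  ∀ x, Γ₁ x ≠ none → Γ₂ x = none

mutual
  /-- Internal terms of the linear language, including locations `ℓ`
  and the store-capturing `share{σ,Σ} e` (the surface `share e` is
  `share{∅,∅} e`). -/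
  inductive LExp : Type
    | var : Var → LExp
    | pair : LExp → LExp → LExp
    | letpair : Var → Var → LExp → LExp → LExp
    | unit : LExp
    | letunit : LExp → LExp → LExp
    | lam : Var → LTy → LExp → LExp
    | app : LExp → LExp → LExp
    | inj : Bool → LExp → LExp
    | case : LExp → Var → LExp → Var → LExp → LExp
    | fold : LTy → LExp → LExp
    | unfold : LExp → LExp
    | share : LStore → LStoreTy → LExp → LExp
    | copy : LExp → LExp
    | new : LExp → LExp
    | free : LExp → LExp
    | box : LExp → LExp
    | unbox : LExp → LExp
    | loc : Loc → LExp

  /-- Stores: each location is empty, or holds a value together with its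
  own local store. -/
  inductive LStore : Type
    | nil : LStore
    | consEmpty : Loc → LStore → LStore
    | consFull : Loc → LStore → LExp → LStore → LStore

  /-- Store typings: `ℓ dead τ` (empty location) or
  `ℓ alive(Γ, Σ) τ` (full location whose value owns `Γ` and a local
  store of typing `Σ`). -/
  inductive LStoreTy : Type
    | nil : LStoreTy
    | consDead : Loc → LTy → LStoreTy → LStoreTy
    | consAlive : Loc → Ctx → LStoreTy → LTy → LStoreTy → LStoreTy
end

/-- Union of stores. -/
def LStore.append : LStore → LStore → LStore
  | .nil, σ => σ
  | .consEmpty l σ₁, σ => .consEmpty l (σ₁.append σ)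
  | .consFull l σl v σ₁, σ => .consFull l σl v (σ₁.append σ)

/-- Domain of a store. -/
def LStore.locs : LStore → List Loc
  | .nil => []
  | .consEmpty l σ => l :: σ.locs
  | .consFull l _ _ σ => l :: σ.locs

def LStoreTy.append : LStoreTy → LStoreTy → LStoreTy
  | .nil, S => S
  | .consDead l τ S₁, S => .consDead l τ (S₁.append S)
  | .consAlive l Γ Sl τ S₁, S => .consAlive l Γ Sl τ (S₁.append S)

def LStoreTy.locs : LStoreTy → List Loc
  | .nil => []
  | .consDead l _ S => l :: S.locs
  | .consAlive l _ _ _ S => l :: S.locs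

def StoreDisjoint (σ₁ σ₂ : LStore) : Prop :=
  ∀ l, l ∈ σ₁.locs → l ∉ σ₂.locs

def STDisjoint (S₁ S₂ : LStoreTy) : Prop :=
  ∀ l, l ∈ S₁.locs → l ∉ S₂.locs

/-- Values of the (internal) linear language. -/
inductive IsVal : LExp → Prop
  | var (x : Var) : IsVal (.var x)
  | pair {v₁ v₂} : IsVal v₁ → IsVal v₂ → IsVal (.pair v₁ v₂)
  | unit : IsVal .unit
  | lam (x : Var) (τ : LTy) (e : LExp) : IsVal (.lam x τ e)
  | inj (i : Bool) {v} : IsVal v → IsVal (.inj i v)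
  | fold (τ : LTy) {v} : IsVal v → IsVal (.fold τ v)
  | share (σ : LStore) (S : LStoreTy) {v} : IsVal v → IsVal (.share σ S v)
  | loc (l : Loc) : IsVal (.loc l)

/-- The internal typing judgment `Σ; Γ ⊢ σ ▷ e : τ` on configurations. -/
inductive LTyping : LStoreTy → Ctx → LStore → LExp → LTy → Prop
  | var {Γ : Ctx} {x τ} :
      (∀ y τ', y ≠ x → Γ y = some τ' → ∃ τ'', τ' = LTy.bang τ'') →
      Γ x = some τ →
      LTyping .nil Γ .nil (.var x) τ
  | unit {Γ : Ctx} :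
      Γ.Duplicable →
      LTyping .nil Γ .nil .unit .unit
  | pair {S₁ Γ₁ σ₁ e₁ τ₁ S₂ Γ₂ σ₂ e₂ τ₂} :
      LTyping S₁ Γ₁ σ₁ e₁ τ₁ → LTyping S₂ Γ₂ σ₂ e₂ τ₂ →
      CtxJoinDef Γ₁ Γ₂ → STDisjoint S₁ S₂ → StoreDisjoint σ₁ σ₂ →
      LTyping (S₁.append S₂) (ctxJoin Γ₁ Γ₂) (σ₁.append σ₂)
        (.pair e₁ e₂) (.tensor τ₁ τ₂)
  | letpair {S Γ σ e τ₁ τ₂ S' Γ' σ' x₁ x₂ e' τ} :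
      LTyping S Γ σ e (.tensor τ₁ τ₂) →
      LTyping S' (Ctx.cons x₁ τ₁ (Ctx.cons x₂ τ₂ Γ')) σ' e' τ →
      CtxJoinDef Γ Γ' → STDisjoint S S' → StoreDisjoint σ σ' →
      LTyping (S.append S') (ctxJoin Γ Γ') (σ.append σ')
        (.letpair x₁ x₂ e e') τ
  | letunit {S Γ σ e S' Γ' σ' e' τ} :
      LTyping S Γ σ e .unit →
      LTyping S' Γ' σ' e' τ →
      CtxJoinDef Γ Γ' → STDisjoint S S' → StoreDisjoint σ σ' →
      LTyping (S.append S') (ctxJoin Γ Γ') (σ.append σ')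
        (.letunit e e') τ
  | lam {S Γ σ x τ e τ'} :
      LTyping S (Ctx.cons x τ Γ) σ e τ' →
      LTyping S Γ σ (.lam x τ e) (.lolli τ τ')
  | app {S Γ σ e τ' τ S' Γ' σ' e'} :
      LTyping S Γ σ e (.lolli τ' τ) →
      LTyping S' Γ' σ' e' τ' →
      CtxJoinDef Γ Γ' → STDisjoint S S' → StoreDisjoint σ σ' →
      LTyping (S.append S') (ctxJoin Γ Γ') (σ.append σ') (.app e e') τ
  | inj {S Γ σ e τ₁ τ₂} (i : Bool) :
      LTyping S Γ σ e (cond i τ₁ τ₂) →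
      LTyping S Γ σ (.inj i e) (.sum τ₁ τ₂)
  | case {S Γ σ e τ₁ τ₂ S' Γ' σ' x₁ e₁ x₂ e₂ τ} :
      LTyping S Γ σ e (.sum τ₁ τ₂) →
      LTyping S' (Ctx.cons x₁ τ₁ Γ') σ' e₁ τ →
      LTyping S' (Ctx.cons x₂ τ₂ Γ') σ' e₂ τ →
      CtxJoinDef Γ Γ' → STDisjoint S S' → StoreDisjoint σ σ' →
      LTyping (S.append S') (ctxJoin Γ Γ') (σ.append σ')
        (.case e x₁ e₁ x₂ e₂) τ
  | fold {S Γ σ e τb} :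
      LTyping S Γ σ e (LTy.unfoldMu τb) →
      LTyping S Γ σ (.fold (.mu τb) e) (.mu τb)
  | unfold {S Γ σ e τb} :
      LTyping S Γ σ e (.mu τb) →
      LTyping S Γ σ (.unfold e) (LTy.unfoldMu τb)
  | share {S Γ σ e τ} :
      LTyping S Γ σ e τ →
      Γ.Duplicable →
      LTyping .nil Γ .nil (.share σ S e) (.bang τ)
  | copy {S Γ σ e τ} :
      LTyping S Γ σ e (.bang τ) →
      LTyping S Γ σ (.copy e) τ
  | new {S Γ σ e} :
      LTyping S Γ σ e .unit →
      LTyping S Γ σ (.new e) .emptybox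
  | free {S Γ σ e} :
      LTyping S Γ σ e .emptybox →
      LTyping S Γ σ (.free e) .unit
  | box {S Γ σ e τ} :
      LTyping S Γ σ e (.tensor .emptybox τ) →
      LTyping S Γ σ (.box e) (.box τ)
  | unbox {S Γ σ e τ} :
      LTyping S Γ σ e (.box τ) →
      LTyping S Γ σ (.unbox e) (.tensor .emptybox τ)
  | locDead {Γ : Ctx} {l τ} :
      Γ.Duplicable →
      LTyping (.consDead l τ .nil) Γ (.consEmpty l .nil) (.loc l) .emptybox
  | locAlive {Sv Γv σv v τ} {Γ' : Ctx} {l} :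
      LTyping Sv Γv σv v τ →
      IsVal v →
      Γ'.Duplicable →
      CtxJoinDef Γv Γ' →
      LTyping (.consAlive l Γv Sv τ .nil) (ctxJoin Γv Γ')
        (.consFull l σv v .nil) (.loc l) (.box τ)

/-- Surface terms: no locations, and `share` only in its surface form
`share{∅,∅} e`. -/
inductive Surface : LExp → Prop
  | var (x) : Surface (.var x)
  | pair {a b} : Surface a → Surface b → Surface (.pair a b)
  | letpair {x₁ x₂ a b} : Surface a → Surface b → Surface (.letpair x₁ x₂ a b)
  | unit : Surface .unit
  | letunit {a b} : Surface a → Surface b → Surface (.letunit a b)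
  | lam {x τ a} : Surface a → Surface (.lam x τ a)
  | app {a b} : Surface a → Surface b → Surface (.app a b)
  | inj {i a} : Surface a → Surface (.inj i a)
  | case {a x₁ a₁ x₂ a₂} : Surface a → Surface a₁ → Surface a₂ →
      Surface (.case a x₁ a₁ x₂ a₂)
  | fold {τ a} : Surface a → Surface (.fold τ a)
  | unfold {a} : Surface a → Surface (.unfold a)
  | share {a} : Surface a → Surface (.share .nil .nil a)
  | copy {a} : Surface a → Surface (.copy a)
  | new {a} : Surface a → Surface (.new a)
  | free {a} : Surface a → Surface (.free a)
  | box {a} : Surface a → Surface (.box a)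
  | unbox {a} : Surface a → Surface (.unbox a)

/-- The surface typing judgment `Γ ⊢ e : τ` of the linear language
(two-sided intuitionistic linear logic rules, no stores). -/
inductive SurfTyping : Ctx → LExp → LTy → Prop
  | var {Γ : Ctx} {x τ} :
      (∀ y τ', y ≠ x → Γ y = some τ' → ∃ τ'', τ' = LTy.bang τ'') →
      Γ x = some τ →
      SurfTyping Γ (.var x) τ
  | unit {Γ : Ctx} : Γ.Duplicable → SurfTyping Γ .unit .unit
  | pair {Γ₁ e₁ τ₁ Γ₂ e₂ τ₂} :
      SurfTyping Γ₁ e₁ τ₁ → SurfTyping Γ₂ e₂ τ₂ → CtxJoinDef Γ₁ Γ₂ →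
      SurfTyping (ctxJoin Γ₁ Γ₂) (.pair e₁ e₂) (.tensor τ₁ τ₂)
  | letpair {Γ e τ₁ τ₂ Γ' x₁ x₂ e' τ} :
      SurfTyping Γ e (.tensor τ₁ τ₂) →
      SurfTyping (Ctx.cons x₁ τ₁ (Ctx.cons x₂ τ₂ Γ')) e' τ →
      CtxJoinDef Γ Γ' →
      SurfTyping (ctxJoin Γ Γ') (.letpair x₁ x₂ e e') τ
  | letunit {Γ e Γ' e' τ} :
      SurfTyping Γ e .unit → SurfTyping Γ' e' τ → CtxJoinDef Γ Γ' →
      SurfTyping (ctxJoin Γ Γ') (.letunit e e') τ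
  | lam {Γ x τ e τ'} :
      SurfTyping (Ctx.cons x τ Γ) e τ' →
      SurfTyping Γ (.lam x τ e) (.lolli τ τ')
  | app {Γ e τ' τ Γ' e'} :
      SurfTyping Γ e (.lolli τ' τ) → SurfTyping Γ' e' τ' → CtxJoinDef Γ Γ' →
      SurfTyping (ctxJoin Γ Γ') (.app e e') τ
  | inj {Γ e τ₁ τ₂} (i : Bool) :
      SurfTyping Γ e (cond i τ₁ τ₂) →
      SurfTyping Γ (.inj i e) (.sum τ₁ τ₂)
  | case {Γ e τ₁ τ₂ Γ' x₁ e₁ x₂ e₂ τ} :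
      SurfTyping Γ e (.sum τ₁ τ₂) →
      SurfTyping (Ctx.cons x₁ τ₁ Γ') e₁ τ →
      SurfTyping (Ctx.cons x₂ τ₂ Γ') e₂ τ →
      CtxJoinDef Γ Γ' →
      SurfTyping (ctxJoin Γ Γ') (.case e x₁ e₁ x₂ e₂) τ
  | fold {Γ e τb} :
      SurfTyping Γ e (LTy.unfoldMu τb) →
      SurfTyping Γ (.fold (.mu τb) e) (.mu τb)
  | unfold {Γ e τb} :
      SurfTyping Γ e (.mu τb) →
      SurfTyping Γ (.unfold e) (LTy.unfoldMu τb)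
  | share {Γ e τ} :
      SurfTyping Γ e τ → Γ.Duplicable →
      SurfTyping Γ (.share .nil .nil e) (.bang τ)
  | copy {Γ e τ} :
      SurfTyping Γ e (.bang τ) →
      SurfTyping Γ (.copy e) τ
  | new {Γ e} : SurfTyping Γ e .unit → SurfTyping Γ (.new e) .emptybox
  | free {Γ e} : SurfTyping Γ e .emptybox → SurfTyping Γ (.free e) .unit
  | box {Γ e τ} :
      SurfTyping Γ e (.tensor .emptybox τ) → SurfTyping Γ (.box e) (.box τ)
  | unbox {Γ e τ} :
      SurfTyping Γ e (.box τ) → SurfTyping Γ (.unbox e) (.tensor .emptybox τ)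

lemma stdisj_nil : STDisjoint .nil S := by intro l h; cases h
lemma sdisj_nil : StoreDisjoint .nil σ := by intro l h; cases h

lemma surf_to_int {Γ : Ctx} {e : LExp} {τ : LTy} (h : SurfTyping Γ e τ) :
    LTyping .nil Γ .nil e τ := by
  induction h with
  | var h1 h2 => exact LTyping.var h1 h2
  | unit h => exact LTyping.unit h
  | pair _ _ hj ih1 ih2 => exact LTyping.pair ih1 ih2 hj stdisj_nil sdisj_nil
  | letpair _ _ hj ih1 ih2 => exact LTyping.letpair ih1 ih2 hj stdisj_nil sdisj_nil
  | letunit _ _ hj ih1 ih2 => exact LTyping.letunit ih1 ih2 hj stdisj_nil sdisj_nil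
  | lam _ ih => exact LTyping.lam ih
  | app _ _ hj ih1 ih2 => exact LTyping.app ih1 ih2 hj stdisj_nil sdisj_nil
  | inj i _ ih => exact LTyping.inj i ih
  | case _ _ _ hj ih1 ih2 ih3 => exact LTyping.case ih1 ih2 ih3 hj stdisj_nil sdisj_nil
  | fold _ ih => exact LTyping.fold ih
  | unfold _ ih => exact LTyping.unfold ih
  | share _ hd ih => exact LTyping.share ih hd
  | copy _ ih => exact LTyping.copy ih
  | new _ ih => exact LTyping.new ih
  | free _ ih => exact LTyping.free ih
  | box _ ih => exact LTyping.box ih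
  | unbox _ ih => exact LTyping.unbox ih

lemma int_to_surf {S : LStoreTy} {Γ : Ctx} {σ : LStore} {e : LExp} {τ : LTy}
    (h : LTyping S Γ σ e τ) (hs : Surface e) :
    S = .nil ∧ σ = .nil ∧ SurfTyping Γ e τ := by
  induction h with
  | var h1 h2 => exact ⟨rfl, rfl, SurfTyping.var h1 h2⟩
  | unit h => exact ⟨rfl, rfl, SurfTyping.unit h⟩
  | pair _ _ hj _ _ ih1 ih2 =>
      cases hs with | pair h1 h2 =>
      obtain ⟨rfl, rfl, t1⟩ := ih1 h1; obtain ⟨rfl, rfl, t2⟩ := ih2 h2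
      exact ⟨rfl, rfl, SurfTyping.pair t1 t2 hj⟩
  | letpair _ _ hj _ _ ih1 ih2 =>
      cases hs with | letpair h1 h2 =>
      obtain ⟨rfl, rfl, t1⟩ := ih1 h1; obtain ⟨rfl, rfl, t2⟩ := ih2 h2
      exact ⟨rfl, rfl, SurfTyping.letpair t1 t2 hj⟩
  | letunit _ _ hj _ _ ih1 ih2 =>
      cases hs with | letunit h1 h2 =>
      obtain ⟨rfl, rfl, t1⟩ := ih1 h1; obtain ⟨rfl, rfl, t2⟩ := ih2 h2
      exact ⟨rfl, rfl, SurfTyping.letunit t1 t2 hj⟩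
  | lam _ ih =>
      cases hs with | lam h1 =>
      obtain ⟨rfl, rfl, t1⟩ := ih h1
      exact ⟨rfl, rfl, SurfTyping.lam t1⟩
  | app _ _ hj _ _ ih1 ih2 =>
      cases hs with | app h1 h2 =>
      obtain ⟨rfl, rfl, t1⟩ := ih1 h1; obtain ⟨rfl, rfl, t2⟩ := ih2 h2
      exact ⟨rfl, rfl, SurfTyping.app t1 t2 hj⟩
  | inj i _ ih =>
      cases hs with | inj h1 =>
      obtain ⟨rfl, rfl, t1⟩ := ih h1
      exact ⟨rfl, rfl, SurfTyping.inj i t1⟩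
  | case _ _ _ hj _ _ ih1 ih2 ih3 =>
      cases hs with | case h1 h2 h3 =>
      obtain ⟨rfl, rfl, t1⟩ := ih1 h1; obtain ⟨rfl, rfl, t2⟩ := ih2 h2
      obtain ⟨_, _, t3⟩ := ih3 h3
      exact ⟨rfl, rfl, SurfTyping.case t1 t2 t3 hj⟩
  | fold _ ih =>
      cases hs with | fold h1 =>
      obtain ⟨rfl, rfl, t1⟩ := ih h1
      exact ⟨rfl, rfl, SurfTyping.fold t1⟩
  | unfold _ ih =>
      cases hs with | unfold h1 =>
      obtain ⟨rfl, rfl, t1⟩ := ih h1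
      exact ⟨rfl, rfl, SurfTyping.unfold t1⟩
  | share _ hd ih =>
      cases hs with | share h1 =>
      obtain ⟨_, _, t1⟩ := ih h1
      exact ⟨rfl, rfl, SurfTyping.share t1 hd⟩
  | copy _ ih =>
      cases hs with | copy h1 =>
      obtain ⟨rfl, rfl, t1⟩ := ih h1
      exact ⟨rfl, rfl, SurfTyping.copy t1⟩
  | new _ ih =>
      cases hs with | new h1 =>
      obtain ⟨rfl, rfl, t1⟩ := ih h1
      exact ⟨rfl, rfl, SurfTyping.new t1⟩
  | free _ ih =>
      cases hs with | free h1 =>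
      obtain ⟨rfl, rfl, t1⟩ := ih h1
      exact ⟨rfl, rfl, SurfTyping.free t1⟩
  | box _ ih =>
      cases hs with | box h1 =>
      obtain ⟨rfl, rfl, t1⟩ := ih h1
      exact ⟨rfl, rfl, SurfTyping.box t1⟩
  | unbox _ ih =>
      cases hs with | unbox h1 =>
      obtain ⟨rfl, rfl, t1⟩ := ih h1
      exact ⟨rfl, rfl, SurfTyping.unbox t1⟩
  | locDead _ => cases hs
  | locAlive _ _ _ _ _ => cases hs

/-- on surface terms, the surface typing judgment coincides with
the internal typing judgment at empty store and store typing. -/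
theorem surface_iff_internal {Γ : Ctx} {e : LExp} {τ : LTy}
    (hs : Surface e) :
    SurfTyping Γ e τ ↔ LTyping .nil Γ .nil e τ := by
  exact ⟨surf_to_int, fun h => (int_to_surf h hs).2.2⟩
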